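/- For every k ∈ ℕ, the operator D_{(1,k)} : f ↦ (1/(1−z)^{k+1}) ⊙ f maps rational power series to rational power series, and is given by the differential operator ∑_{j=0}^{k} (C(k,j)/j!) zʲ (d/dz)ʲ. -/

import Mathlib

/-!
The `n`-th coefficient of `1/(1-z)^(k+1)` is `C(n+k,k) = ∑ⱼ C(n,j) C(k,j)` (Vandermonde), while
`zʲ f⁽ʲ⁾` has `n`-th coefficient `n(n-1)⋯(n-j+1) aₙ = j! C(n,j) aₙ`; comparing coefficients gives the
differential operator. Rational series form a `ℂ`-subalgebra of `ℂ⟦X⟧` that is closed under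
differentiation (quotient rule), so the operator preserves rationality.
-/

open PowerSeries Finset

noncomputable def hadamard (f g : PowerSeries ℂ) : PowerSeries ℂ :=
  PowerSeries.mk fun n => (PowerSeries.coeff n f) * (PowerSeries.coeff n g)

def IsRationalPS (f : PowerSeries ℂ) : Prop :=
  ∃ P Q : Polynomial ℂ, Q.coeff 0 ≠ 0 ∧ f * (Q : PowerSeries ℂ) = (P : PowerSeries ℂ)

theorem Nat.sum_range_choose_mul_choose (n k : ℕ) :
    ∑ j ∈ range (k + 1), n.choose j * k.choose j = (n + k).choose k := by
  rw [Nat.add_choose_eq, Finset.Nat.sum_antidiagonal_eq_sum_range_succ_mk]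
  refine Finset.sum_congr rfl fun j hj => ?_
  rw [Nat.choose_symm (Finset.mem_range_succ_iff.mp hj)]

namespace PowerSeries

theorem coeff_X_pow_mul_iterate_derivative {R : Type*} [CommSemiring R] (f : R⟦X⟧) (j n : ℕ) :
    coeff n (X ^ j * (d⁄dX R)^[j] f) = n.descFactorial j * coeff n f := by
  rw [coeff_X_pow_mul']
  split_ifs with h
  · obtain ⟨m, rfl⟩ := Nat.exists_eq_add_of_le' h
    rw [Nat.add_sub_cancel, coeff_iterate_derivative, Nat.add_descFactorial_eq_ascFactorial]
  · rw [Nat.descFactorial_of_lt (not_le.mp h), Nat.cast_zero, zero_mul]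

theorem coeff_inv_one_sub_X_pow {K : Type*} [Field K] (k n : ℕ) :
    coeff n ((1 - X : K⟦X⟧) ^ (k + 1))⁻¹ = (n + k).choose k := by
  have h : (invOneSubPow K (k + 1)).val = ((1 - X : K⟦X⟧) ^ (k + 1))⁻¹ := by
    rw [PowerSeries.eq_inv_iff_mul_eq_one (by simp), ← invOneSubPow_inv_eq_one_sub_pow]
    exact (invOneSubPow K (k + 1)).val_inv
  rw [← h, invOneSubPow_val_succ_eq_mk_add_choose, coeff_mk, add_comm k n]

end PowerSeries

theorem coeff_hadamard (f g : ℂ⟦X⟧) (n : ℕ) :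
    coeff n (hadamard f g) = coeff n f * coeff n g :=
  coeff_mk _ _

theorem hadamard_inv_one_sub_X_pow (k : ℕ) (f : ℂ⟦X⟧) :
    hadamard ((1 - X : ℂ⟦X⟧) ^ (k + 1))⁻¹ f
      = ∑ j ∈ range (k + 1), C ((k.choose j : ℂ) / j.factorial) * (X ^ j * (d⁄dX ℂ)^[j] f) := by
  ext n
  have term (j : ℕ) : coeff n (C ((k.choose j : ℂ) / j.factorial) * (X ^ j * (d⁄dX ℂ)^[j] f))
      = (n.choose j * k.choose j : ℕ) * coeff n f := by
    rw [coeff_C_mul, coeff_X_pow_mul_iterate_derivative, Nat.descFactorial_eq_factorial_mul_choose]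
    have : (j.factorial : ℂ) ≠ 0 := Nat.cast_ne_zero.mpr j.factorial_ne_zero
    push_cast
    field_simp
  rw [coeff_hadamard, coeff_inv_one_sub_X_pow, map_sum, Finset.sum_congr rfl fun j _ => term j,
    ← Finset.sum_mul, ← Nat.cast_sum, Nat.sum_range_choose_mul_choose]

def rationalPowerSeries : Subalgebra ℂ ℂ⟦X⟧ where
  carrier := {f | IsRationalPS f}
  mul_mem' := by
    rintro f g ⟨P₁, Q₁, hQ₁, hf⟩ ⟨P₂, Q₂, hQ₂, hg⟩
    refine ⟨P₁ * P₂, Q₁ * Q₂, by rw [Polynomial.mul_coeff_zero]; exact mul_ne_zero hQ₁ hQ₂, ?_⟩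
    rw [Polynomial.coe_mul, Polynomial.coe_mul, ← hf, ← hg]
    ring
  add_mem' := by
    rintro f g ⟨P₁, Q₁, hQ₁, hf⟩ ⟨P₂, Q₂, hQ₂, hg⟩
    refine ⟨P₁ * Q₂ + P₂ * Q₁, Q₁ * Q₂,
      by rw [Polynomial.mul_coeff_zero]; exact mul_ne_zero hQ₁ hQ₂, ?_⟩
    push_cast
    rw [← hf, ← hg]
    ring
  algebraMap_mem' c := ⟨Polynomial.C c, 1, by simp, by simp⟩

theorem mem_rationalPowerSeries {f : ℂ⟦X⟧} : f ∈ rationalPowerSeries ↔ IsRationalPS f :=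
  Iff.rfl

theorem coe_polynomial_mem_rationalPowerSeries (p : Polynomial ℂ) :
    (p : ℂ⟦X⟧) ∈ rationalPowerSeries :=
  ⟨p, 1, by simp, by simp⟩

theorem derivative_mem_rationalPowerSeries {f : ℂ⟦X⟧} (hf : f ∈ rationalPowerSeries) :
    d⁄dX ℂ f ∈ rationalPowerSeries := by
  obtain ⟨P, Q, hQ, hPQ⟩ := hf
  have hd := congrArg (d⁄dX ℂ) hPQ
  rw [Derivation.leibniz, smul_eq_mul, smul_eq_mul, derivative_coe, derivative_coe] at hd
  refine ⟨Polynomial.derivative P * Q - P * Polynomial.derivative Q, Q * Q,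
    by rw [Polynomial.mul_coeff_zero]; exact mul_ne_zero hQ hQ, ?_⟩
  push_cast
  linear_combination (Q : ℂ⟦X⟧) * hd - (Polynomial.derivative Q : ℂ⟦X⟧) * hPQ

theorem iterate_derivative_mem_rationalPowerSeries {f : ℂ⟦X⟧} (hf : f ∈ rationalPowerSeries)
    (j : ℕ) : (d⁄dX ℂ)^[j] f ∈ rationalPowerSeries := by
  induction j with
  | zero => exact hf
  | succ j ih => rw [Function.iterate_succ_apply']; exact derivative_mem_rationalPowerSeries ih

theorem diag_operator_preserves_rational (k : ℕ) :
    (∀ f : PowerSeries ℂ,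
      hadamard (((1 - X : PowerSeries ℂ) ^ (k + 1))⁻¹) f
        = ∑ j ∈ range (k + 1),
            PowerSeries.C ((k.choose j : ℂ) / (j.factorial : ℂ)) *
              ((X : PowerSeries ℂ) ^ j * (fun g => PowerSeries.derivative ℂ g)^[j] f)) ∧
    (∀ f : PowerSeries ℂ, IsRationalPS f →
      IsRationalPS (hadamard (((1 - X : PowerSeries ℂ) ^ (k + 1))⁻¹) f)) := by
  refine ⟨hadamard_inv_one_sub_X_pow k, fun f hf => ?_⟩
  rw [← mem_rationalPowerSeries, hadamard_inv_one_sub_X_pow]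
  refine Subalgebra.sum_mem _ fun j _ => Subalgebra.mul_mem _ ?_ (Subalgebra.mul_mem _ ?_ ?_)
  · rw [← Polynomial.coe_C]
    exact coe_polynomial_mem_rationalPowerSeries _
  · rw [← Polynomial.coe_X, ← Polynomial.coe_pow]
    exact coe_polynomial_mem_rationalPowerSeries _
  · exact iterate_derivative_mem_rationalPowerSeries hf j
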